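/- arXiv:2002.12568 — 2 statements merged into one kernel-verified Lean document; each statement's English description precedes it below -/
import Mathlib

section
/- Let C and D be coalgebras over a field k, and suppose that to every finite-dimensional right C-comodule (M, ρ_M) there is assigned a right D-coaction ρ^F_M : M → M ⊗ D on the same underlying space, such that every C-comodule map between finite-dimensional right C-comodules is also a D-comodule map for the assigned coactions. Let P ⊆ C be a finite-dimensional subcoalgebra, regarded as a finite-dimensional right C-comodule via ρ_P = (id ⊗ ι_P) ∘ Δ_P, where ι_P : P → C is the inclusion and Δ_P is the restricted comultiplication, and let ρ^F_P be the assigned D-coaction on P. Then the map φ_P : P → D obtained as the composition of ρ^F_P with ε_P ⊗ id : P ⊗ D → k ⊗ D and the canonical isomorphism k ⊗ D ≅ D is a coalgebra map, and moreover φ_P is a D-comodule map from (P, ρ^F_P) to (D, Δ_D). -/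
open TensorProduct

noncomputable section

/-- `ρ : M →ₗ M ⊗ C` is a (coassociative, counital) right coaction of the coalgebra `C`. -/
def IsCoaction (k : Type) [Field k] (C : Type) [AddCommGroup C] [Module k C] [Coalgebra k C]
    (M : Type) [AddCommGroup M] [Module k M] (ρ : M →ₗ[k] M ⊗[k] C) : Prop :=
  LinearMap.rTensor C ρ ∘ₗ ρ =
    (TensorProduct.assoc k M C C).symm.toLinearMap ∘ₗ
      LinearMap.lTensor M (Coalgebra.comul (R := k)) ∘ₗ ρ ∧
  (TensorProduct.rid k M).toLinearMap ∘ₗ LinearMap.lTensor M (Coalgebra.counit (R := k)) ∘ₗ ρ =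
    LinearMap.id

/-- `φ : C →ₗ D` is a map of coalgebras. -/
def IsCoalgebraMap (k : Type) [Field k]
    (C : Type) [AddCommGroup C] [Module k C] [Coalgebra k C]
    (D : Type) [AddCommGroup D] [Module k D] [Coalgebra k D] (φ : C →ₗ[k] D) : Prop :=
  Coalgebra.comul (R := k) (A := D) ∘ₗ φ =
    TensorProduct.map φ φ ∘ₗ Coalgebra.comul (R := k) (A := C) ∧
  Coalgebra.counit (R := k) (A := D) ∘ₗ φ = Coalgebra.counit (R := k) (A := C)

namespace CoalgAux

open LinearMap

variable {k : Type} [Field k]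
variable {A B V M N W X Y : Type}
  [AddCommGroup A] [Module k A] [AddCommGroup B] [Module k B]
  [AddCommGroup V] [Module k V] [AddCommGroup M] [Module k M]
  [AddCommGroup N] [Module k N] [AddCommGroup W] [Module k W]
  [AddCommGroup X] [Module k X] [AddCommGroup Y] [Module k Y]

lemma assoc_symm_mk (v : V) :
    (TensorProduct.assoc k V M W).symm.toLinearMap ∘ₗ TensorProduct.mk k V (M ⊗[k] W) v
      = rTensor W (TensorProduct.mk k V M v) := by
  apply TensorProduct.ext'; intro m c; simp

lemma lTensor_mk (f : M →ₗ[k] N) (v : V) :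
    lTensor V f ∘ₗ TensorProduct.mk k V M v = TensorProduct.mk k V N v ∘ₗ f := by
  apply LinearMap.ext; intro m; simp

lemma mk_comodule_map (ρ : M →ₗ[k] M ⊗[k] W) (v : V) :
    ((TensorProduct.assoc k V M W).symm.toLinearMap ∘ₗ lTensor V ρ) ∘ₗ TensorProduct.mk k V M v
      = rTensor W (TensorProduct.mk k V M v) ∘ₗ ρ := by
  rw [LinearMap.comp_assoc, lTensor_mk, ← LinearMap.comp_assoc, assoc_symm_mk]

lemma mk_comodule_map' (ρ : M →ₗ[k] M ⊗[k] W) (v : V) :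
    (TensorProduct.assoc k V M W).symm.toLinearMap ∘ₗ lTensor V ρ ∘ₗ TensorProduct.mk k V M v
      = rTensor W (TensorProduct.mk k V M v) ∘ₗ ρ := by
  rw [← LinearMap.comp_assoc, mk_comodule_map]

lemma nat1 (g : M →ₗ[k] N) (δ : W →ₗ[k] X ⊗[k] Y) :
    rTensor Y (rTensor X g) ∘ₗ (TensorProduct.assoc k M X Y).symm.toLinearMap ∘ₗ lTensor M δ
      = (TensorProduct.assoc k N X Y).symm.toLinearMap ∘ₗ lTensor N δ ∘ₗ rTensor W g := by
  apply TensorProduct.ext'; intro m c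
  simp only [LinearMap.comp_apply, lTensor_tmul, rTensor_tmul]
  induction δ c using TensorProduct.induction_on with
  | zero => simp
  | tmul x y => simp
  | add a b ha hb => simp only [tmul_add, map_add, ha, hb]

lemma nat2 (g : M →ₗ[k] N) (ε : W →ₗ[k] k) :
    (TensorProduct.rid k N).toLinearMap ∘ₗ lTensor N ε ∘ₗ rTensor W g
      = g ∘ₗ (TensorProduct.rid k M).toLinearMap ∘ₗ lTensor M ε := by
  apply TensorProduct.ext'; intro m c; simp

lemma nat3 (f : A →ₗ[k] B) :
    rTensor W (lTensor V f) ∘ₗ (TensorProduct.assoc k V A W).symm.toLinearMap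
      = (TensorProduct.assoc k V B W).symm.toLinearMap ∘ₗ lTensor V (rTensor W f) := by
  apply TensorProduct.ext'; intro v y
  simp only [LinearMap.comp_apply, lTensor_tmul]
  induction y using TensorProduct.induction_on with
  | zero => simp
  | tmul x w => simp
  | add a b ha hb => simp only [tmul_add, map_add, ha, hb]

lemma natG (f : A →ₗ[k] k) :
    lTensor V ((TensorProduct.lid k W).toLinearMap ∘ₗ rTensor W f)
        ∘ₗ (TensorProduct.assoc k V A W).toLinearMap
      = rTensor W ((TensorProduct.rid k V).toLinearMap ∘ₗ lTensor V f) := by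
  apply TensorProduct.ext_threefold; intro v a w
  simp [smul_tmul, tmul_smul]

lemma natH (f : A →ₗ[k] k) :
    rTensor Y ((TensorProduct.lid k X).toLinearMap ∘ₗ rTensor X f)
        ∘ₗ (TensorProduct.assoc k A X Y).symm.toLinearMap
      = (TensorProduct.lid k (X ⊗[k] Y)).toLinearMap ∘ₗ rTensor (X ⊗[k] Y) f := by
  apply TensorProduct.ext'; intro a w
  simp only [LinearMap.comp_apply, rTensor_tmul, LinearEquiv.coe_coe, lid_tmul]
  induction w using TensorProduct.induction_on with
  | zero => simp
  | tmul x y => simp [smul_tmul, tmul_smul]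
  | add a' b' ha hb => simp only [tmul_add, map_add, smul_add, ha, hb]

lemma lid_nat (f : W →ₗ[k] X) :
    (TensorProduct.lid k X).toLinearMap ∘ₗ lTensor k f
      = f ∘ₗ (TensorProduct.lid k W).toLinearMap := by
  apply TensorProduct.ext'; intro s w; simp

lemma natK (f : A →ₗ[k] k) (g : B →ₗ[k] k) :
    g ∘ₗ (TensorProduct.lid k B).toLinearMap ∘ₗ rTensor B f
      = f ∘ₗ (TensorProduct.rid k A).toLinearMap ∘ₗ lTensor A g := by
  apply TensorProduct.ext'; intro a b; simp [mul_comm]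

variable {C : Type} [AddCommGroup C] [Module k C] [Coalgebra k C]

lemma tensor_isCoaction (ρ : M →ₗ[k] M ⊗[k] C) (h : IsCoaction k C M ρ) :
    IsCoaction k C (V ⊗[k] M)
      ((TensorProduct.assoc k V M C).symm.toLinearMap ∘ₗ lTensor V ρ) := by
  set ρ₂ := (TensorProduct.assoc k V M C).symm.toLinearMap ∘ₗ lTensor V ρ with hρ₂
  constructor
  · apply TensorProduct.ext'; intro v m
    have e1 : (rTensor C ρ₂ ∘ₗ ρ₂) ∘ₗ TensorProduct.mk k V M v =
        ((TensorProduct.assoc k (V ⊗[k] M) C C).symm.toLinearMap ∘ₗ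
          lTensor (V ⊗[k] M) (Coalgebra.comul (R := k)) ∘ₗ ρ₂) ∘ₗ TensorProduct.mk k V M v := by
      calc rTensor C ρ₂ ∘ₗ ρ₂ ∘ₗ TensorProduct.mk k V M v
          = rTensor C ρ₂ ∘ₗ rTensor C (TensorProduct.mk k V M v) ∘ₗ ρ := by
            rw [hρ₂, mk_comodule_map]
        _ = rTensor C (ρ₂ ∘ₗ TensorProduct.mk k V M v) ∘ₗ ρ := by
            rw [← LinearMap.comp_assoc, ← LinearMap.rTensor_comp]
        _ = rTensor C (rTensor C (TensorProduct.mk k V M v)) ∘ₗ rTensor C ρ ∘ₗ ρ := by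
            rw [hρ₂, mk_comodule_map, LinearMap.rTensor_comp, LinearMap.comp_assoc]
        _ = rTensor C (rTensor C (TensorProduct.mk k V M v)) ∘ₗ
              (TensorProduct.assoc k M C C).symm.toLinearMap ∘ₗ
                lTensor M (Coalgebra.comul (R := k)) ∘ₗ ρ := by rw [h.1]
        _ = (rTensor C (rTensor C (TensorProduct.mk k V M v)) ∘ₗ
              (TensorProduct.assoc k M C C).symm.toLinearMap ∘ₗ
                lTensor M (Coalgebra.comul (R := k))) ∘ₗ ρ := by
            simp only [LinearMap.comp_assoc]
        _ = ((TensorProduct.assoc k (V ⊗[k] M) C C).symm.toLinearMap ∘ₗ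
              lTensor (V ⊗[k] M) (Coalgebra.comul (R := k)) ∘ₗ
                rTensor C (TensorProduct.mk k V M v)) ∘ₗ ρ := by rw [nat1]
        _ = (TensorProduct.assoc k (V ⊗[k] M) C C).symm.toLinearMap ∘ₗ
              lTensor (V ⊗[k] M) (Coalgebra.comul (R := k)) ∘ₗ
                (ρ₂ ∘ₗ TensorProduct.mk k V M v) := by
            rw [hρ₂, mk_comodule_map]; simp only [LinearMap.comp_assoc]
        _ = ((TensorProduct.assoc k (V ⊗[k] M) C C).symm.toLinearMap ∘ₗ
              lTensor (V ⊗[k] M) (Coalgebra.comul (R := k)) ∘ₗ ρ₂) ∘ₗ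
                TensorProduct.mk k V M v := by simp only [LinearMap.comp_assoc]
    exact congrArg (fun f => f m) e1
  · apply TensorProduct.ext'; intro v m
    have e1 : ((TensorProduct.rid k (V ⊗[k] M)).toLinearMap ∘ₗ
          lTensor (V ⊗[k] M) (Coalgebra.counit (R := k)) ∘ₗ ρ₂) ∘ₗ TensorProduct.mk k V M v
        = TensorProduct.mk k V M v := by
      calc ((TensorProduct.rid k (V ⊗[k] M)).toLinearMap ∘ₗ
          lTensor (V ⊗[k] M) (Coalgebra.counit (R := k)) ∘ₗ ρ₂) ∘ₗ TensorProduct.mk k V M v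
          = (TensorProduct.rid k (V ⊗[k] M)).toLinearMap ∘ₗ
              lTensor (V ⊗[k] M) (Coalgebra.counit (R := k)) ∘ₗ
                rTensor C (TensorProduct.mk k V M v) ∘ₗ ρ := by
            rw [hρ₂]; simp only [LinearMap.comp_assoc, mk_comodule_map']
        _ = ((TensorProduct.rid k (V ⊗[k] M)).toLinearMap ∘ₗ
              lTensor (V ⊗[k] M) (Coalgebra.counit (R := k)) ∘ₗ
                rTensor C (TensorProduct.mk k V M v)) ∘ₗ ρ := by
            simp only [LinearMap.comp_assoc]
        _ = (TensorProduct.mk k V M v ∘ₗ (TensorProduct.rid k M).toLinearMap ∘ₗ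
              lTensor M (Coalgebra.counit (R := k))) ∘ₗ ρ := by rw [nat2]
        _ = TensorProduct.mk k V M v ∘ₗ (TensorProduct.rid k M).toLinearMap ∘ₗ
              lTensor M (Coalgebra.counit (R := k)) ∘ₗ ρ := by
            simp only [LinearMap.comp_assoc]
        _ = TensorProduct.mk k V M v := by rw [h.2, LinearMap.comp_id]
    exact congrArg (fun f => f m) e1


end CoalgAux

open LinearMap CoalgAux

variable (k : Type) [Field k]
variable (C : Type) [AddCommGroup C] [Module k C] [Coalgebra k C]
variable (D : Type) [AddCommGroup D] [Module k D] [Coalgebra k D]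

/-- For a finite-dimensional subcoalgebra `P ⊆ C`, regarded as a right `C`-comodule via
`ρ_P = (id ⊗ ι_P) ∘ Δ_P`, the map `φ_P = (ε_P ⊗ id) ∘ ρ^F_P : P → D` is a coalgebra map,
and moreover a `D`-comodule map from `(P, ρ^F_P)` to `(D, Δ_D)`. -/
theorem subcoalgebra_coalgebra_map
    (F : ∀ (M : Type) [AddCommGroup M] [Module k M] [FiniteDimensional k M]
      (ρ : M →ₗ[k] M ⊗[k] C), IsCoaction k C M ρ → (M →ₗ[k] M ⊗[k] D))
    (hF : ∀ (M : Type) [AddCommGroup M] [Module k M] [FiniteDimensional k M]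
      (ρ : M →ₗ[k] M ⊗[k] C) (h : IsCoaction k C M ρ), IsCoaction k D M (F M ρ h))
    (hFmap : ∀ (M : Type) [AddCommGroup M] [Module k M] [FiniteDimensional k M]
      (N : Type) [AddCommGroup N] [Module k N] [FiniteDimensional k N]
      (ρM : M →ₗ[k] M ⊗[k] C) (hM : IsCoaction k C M ρM)
      (ρN : N →ₗ[k] N ⊗[k] C) (hN : IsCoaction k C N ρN)
      (f : M →ₗ[k] N), ρN ∘ₗ f = LinearMap.rTensor C f ∘ₗ ρM →
        F N ρN hN ∘ₗ f = LinearMap.rTensor D f ∘ₗ F M ρM hM)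
    -- a finite-dimensional subcoalgebra `P` of `C`, with restricted comultiplication `ΔP`
    (P : Submodule k C) [FiniteDimensional k P]
    (ΔP : P →ₗ[k] P ⊗[k] P)
    (hΔP : TensorProduct.map P.subtype P.subtype ∘ₗ ΔP =
      Coalgebra.comul (R := k) (A := C) ∘ₗ P.subtype)
    -- `P` regarded as a right `C`-comodule via `ρP = (id ⊗ ι_P) ∘ ΔP`
    (hρP : IsCoaction k C P (LinearMap.lTensor P P.subtype ∘ₗ ΔP)) :
    -- `φ_P := (ε_P ⊗ id) ∘ ρ^F_P` is a coalgebra map from `(P, ΔP, ε|_P)` to `D` …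
    (Coalgebra.comul (R := k) (A := D) ∘ₗ
        ((TensorProduct.lid k D).toLinearMap
          ∘ₗ LinearMap.rTensor D (Coalgebra.counit (R := k) (A := C) ∘ₗ P.subtype)
          ∘ₗ F P (LinearMap.lTensor P P.subtype ∘ₗ ΔP) hρP) =
      TensorProduct.map
          ((TensorProduct.lid k D).toLinearMap
            ∘ₗ LinearMap.rTensor D (Coalgebra.counit (R := k) (A := C) ∘ₗ P.subtype)
            ∘ₗ F P (LinearMap.lTensor P P.subtype ∘ₗ ΔP) hρP)
          ((TensorProduct.lid k D).toLinearMap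
            ∘ₗ LinearMap.rTensor D (Coalgebra.counit (R := k) (A := C) ∘ₗ P.subtype)
            ∘ₗ F P (LinearMap.lTensor P P.subtype ∘ₗ ΔP) hρP) ∘ₗ ΔP) ∧
    (Coalgebra.counit (R := k) (A := D) ∘ₗ
        ((TensorProduct.lid k D).toLinearMap
          ∘ₗ LinearMap.rTensor D (Coalgebra.counit (R := k) (A := C) ∘ₗ P.subtype)
          ∘ₗ F P (LinearMap.lTensor P P.subtype ∘ₗ ΔP) hρP) =
      Coalgebra.counit (R := k) (A := C) ∘ₗ P.subtype) ∧
    -- … and a `D`-comodule map from `(P, ρ^F_P)` to `(D, Δ_D)`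
    (Coalgebra.comul (R := k) (A := D) ∘ₗ
        ((TensorProduct.lid k D).toLinearMap
          ∘ₗ LinearMap.rTensor D (Coalgebra.counit (R := k) (A := C) ∘ₗ P.subtype)
          ∘ₗ F P (LinearMap.lTensor P P.subtype ∘ₗ ΔP) hρP) =
      LinearMap.rTensor D
          ((TensorProduct.lid k D).toLinearMap
            ∘ₗ LinearMap.rTensor D (Coalgebra.counit (R := k) (A := C) ∘ₗ P.subtype)
            ∘ₗ F P (LinearMap.lTensor P P.subtype ∘ₗ ΔP) hρP) ∘ₗ
        F P (LinearMap.lTensor P P.subtype ∘ₗ ΔP) hρP) := by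
  classical
  set ρP := LinearMap.lTensor P P.subtype ∘ₗ ΔP with hρPdef
  set ρF := F P ρP hρP with hρFdef
  set ε' := Coalgebra.counit (R := k) (A := C) ∘ₗ P.subtype with hε'
  set φ := (TensorProduct.lid k D).toLinearMap ∘ₗ LinearMap.rTensor D ε' ∘ₗ ρF with hφ
  set L := (TensorProduct.lid k D).toLinearMap ∘ₗ LinearMap.rTensor D ε' with hLdef
  have hφL : φ = L ∘ₗ ρF := by rw [hφ, hLdef, LinearMap.comp_assoc]
  -- the coaction on `P ⊗ P` through the second factor
  set ρ₂ := (TensorProduct.assoc k P P C).symm.toLinearMap ∘ₗ lTensor (↥P) ρP with hρ₂def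
  have h₂ : IsCoaction k C (↥P ⊗[k] ↥P) ρ₂ := tensor_isCoaction ρP hρP
  set ρF₂ := F (↥P ⊗[k] ↥P) ρ₂ h₂ with hρF₂def
  -- Step 1 : `ρF₂ = (assoc).symm ∘ (id ⊗ ρF)`
  have step1 : ρF₂ = (TensorProduct.assoc k P P D).symm.toLinearMap ∘ₗ lTensor (↥P) ρF := by
    apply TensorProduct.ext'; intro v m
    have h1 := hFmap P (↥P ⊗[k] ↥P) ρP hρP ρ₂ h₂ (TensorProduct.mk k P P v)
      (by rw [hρ₂def]; exact mk_comodule_map ρP v)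
    have h2 : ((TensorProduct.assoc k P P D).symm.toLinearMap ∘ₗ lTensor (↥P) ρF)
        ∘ₗ TensorProduct.mk k P P v = rTensor D (TensorProduct.mk k P P v) ∘ₗ ρF :=
      mk_comodule_map ρF v
    exact congrArg (fun f => f m) (h1.trans h2.symm)
  -- Step 2 : `ΔP` is a `C`-comodule map `(P, ρP) → (P ⊗ P, ρ₂)`
  have step2 : ρ₂ ∘ₗ ΔP = rTensor C ΔP ∘ₗ ρP := by
    have inj : Function.Injective (rTensor C (lTensor (↥P) P.subtype)) :=
      Module.Flat.rTensor_preserves_injective_linearMap _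
        (Module.Flat.lTensor_preserves_injective_linearMap _ P.injective_subtype)
    have hmap : rTensor C P.subtype ∘ₗ ρP = Coalgebra.comul (R := k) (A := C) ∘ₗ P.subtype := by
      rw [hρPdef, ← LinearMap.comp_assoc, LinearMap.rTensor_comp_lTensor, hΔP]
    have E : rTensor C (lTensor (↥P) P.subtype) ∘ₗ ρ₂ ∘ₗ ΔP
        = rTensor C (lTensor (↥P) P.subtype) ∘ₗ rTensor C ΔP ∘ₗ ρP := by
      calc rTensor C (lTensor (↥P) P.subtype) ∘ₗ ρ₂ ∘ₗ ΔP
          = (rTensor C (lTensor (↥P) P.subtype)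
              ∘ₗ (TensorProduct.assoc k P P C).symm.toLinearMap) ∘ₗ lTensor (↥P) ρP ∘ₗ ΔP := by
            rw [hρ₂def]; simp only [LinearMap.comp_assoc]
        _ = (TensorProduct.assoc k P C C).symm.toLinearMap
              ∘ₗ (lTensor (↥P) (rTensor C P.subtype) ∘ₗ lTensor (↥P) ρP) ∘ₗ ΔP := by
            rw [nat3]; simp only [LinearMap.comp_assoc]
        _ = (TensorProduct.assoc k P C C).symm.toLinearMap
              ∘ₗ lTensor (↥P) (rTensor C P.subtype ∘ₗ ρP) ∘ₗ ΔP := by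
            rw [← LinearMap.lTensor_comp]
        _ = (TensorProduct.assoc k P C C).symm.toLinearMap
              ∘ₗ lTensor (↥P) (Coalgebra.comul (R := k) (A := C) ∘ₗ P.subtype) ∘ₗ ΔP := by
            rw [hmap]
        _ = (TensorProduct.assoc k P C C).symm.toLinearMap
              ∘ₗ lTensor (↥P) (Coalgebra.comul (R := k) (A := C)) ∘ₗ ρP := by
            rw [LinearMap.lTensor_comp, hρPdef]; simp only [LinearMap.comp_assoc]
        _ = rTensor C ρP ∘ₗ ρP := hρP.1.symm
        _ = (rTensor C (lTensor (↥P) P.subtype) ∘ₗ rTensor C ΔP) ∘ₗ ρP := by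
            rw [← LinearMap.rTensor_comp, ← hρPdef]
        _ = rTensor C (lTensor (↥P) P.subtype) ∘ₗ rTensor C ΔP ∘ₗ ρP := by
            rw [LinearMap.comp_assoc]
    exact LinearMap.ext fun p => inj (congrArg (fun f => f p) E)
  -- Step 3 : naturality applied to `ΔP`
  have step3 : ((TensorProduct.assoc k P P D).symm.toLinearMap ∘ₗ lTensor (↥P) ρF) ∘ₗ ΔP
      = rTensor D ΔP ∘ₗ ρF := by
    rw [← step1]; exact hFmap P (↥P ⊗[k] ↥P) ρP hρP ρ₂ h₂ ΔP step2
  -- right counit law for `ΔP`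
  have counitP : (TensorProduct.rid k P).toLinearMap ∘ₗ lTensor (↥P) ε' ∘ₗ ΔP
      = LinearMap.id := by
    have h2 := hρP.2
    rw [hρPdef] at h2
    rw [hε', LinearMap.lTensor_comp]
    simp only [LinearMap.comp_assoc] at h2 ⊢
    exact h2
  -- Step 4 : `ρF = (id ⊗ φ) ∘ ΔP`
  have step4 : lTensor (↥P) φ ∘ₗ ΔP = ρF := by
    have E0 : lTensor (↥P) ρF ∘ₗ ΔP
        = (TensorProduct.assoc k P P D).toLinearMap ∘ₗ rTensor D ΔP ∘ₗ ρF := by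
      rw [← (TensorProduct.assoc k P P D).toLinearMap_symm_comp_eq, ← LinearMap.comp_assoc]
      exact step3
    calc lTensor (↥P) φ ∘ₗ ΔP
        = (lTensor (↥P) L ∘ₗ lTensor (↥P) ρF) ∘ₗ ΔP := by rw [← LinearMap.lTensor_comp, ← hφL]
      _ = lTensor (↥P) L ∘ₗ lTensor (↥P) ρF ∘ₗ ΔP := by rw [LinearMap.comp_assoc]
      _ = (lTensor (↥P) L ∘ₗ (TensorProduct.assoc k P P D).toLinearMap)
            ∘ₗ rTensor D ΔP ∘ₗ ρF := by rw [E0]; simp only [LinearMap.comp_assoc]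
      _ = ((lTensor (↥P) L ∘ₗ (TensorProduct.assoc k P P D).toLinearMap)
            ∘ₗ rTensor D ΔP) ∘ₗ ρF := by simp only [LinearMap.comp_assoc]
      _ = (rTensor D ((TensorProduct.rid k P).toLinearMap ∘ₗ lTensor (↥P) ε')
            ∘ₗ rTensor D ΔP) ∘ₗ ρF := by rw [hLdef, natG]
      _ = rTensor D ((TensorProduct.rid k P).toLinearMap ∘ₗ lTensor (↥P) ε' ∘ₗ ΔP) ∘ₗ ρF := by
          rw [← LinearMap.rTensor_comp, LinearMap.comp_assoc]
      _ = ρF := by rw [counitP, LinearMap.rTensor_id, LinearMap.id_comp]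
  -- the comodule-map property of `φ`
  have claimA : Coalgebra.comul (R := k) (A := D) ∘ₗ φ = rTensor D φ ∘ₗ ρF := by
    have hc := (hF P ρP hρP).1
    have E := congrArg (fun f => rTensor D L ∘ₗ f) hc
    calc Coalgebra.comul (R := k) (A := D) ∘ₗ φ
        = (Coalgebra.comul (R := k) (A := D) ∘ₗ (TensorProduct.lid k D).toLinearMap)
            ∘ₗ rTensor D ε' ∘ₗ ρF := by rw [hφ]; simp only [LinearMap.comp_assoc]
      _ = ((TensorProduct.lid k (D ⊗[k] D)).toLinearMap
            ∘ₗ lTensor k (Coalgebra.comul (R := k) (A := D)))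
            ∘ₗ rTensor D ε' ∘ₗ ρF := by rw [lid_nat]
      _ = (TensorProduct.lid k (D ⊗[k] D)).toLinearMap
            ∘ₗ (lTensor k (Coalgebra.comul (R := k) (A := D)) ∘ₗ rTensor D ε') ∘ₗ ρF := by
          simp only [LinearMap.comp_assoc]
      _ = (TensorProduct.lid k (D ⊗[k] D)).toLinearMap
            ∘ₗ (rTensor (D ⊗[k] D) ε' ∘ₗ lTensor (↥P) (Coalgebra.comul (R := k) (A := D)))
            ∘ₗ ρF := by rw [LinearMap.lTensor_comp_rTensor, LinearMap.rTensor_comp_lTensor]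
      _ = ((TensorProduct.lid k (D ⊗[k] D)).toLinearMap ∘ₗ rTensor (D ⊗[k] D) ε')
            ∘ₗ lTensor (↥P) (Coalgebra.comul (R := k) (A := D)) ∘ₗ ρF := by
          simp only [LinearMap.comp_assoc]
      _ = (rTensor D L ∘ₗ (TensorProduct.assoc k P D D).symm.toLinearMap)
            ∘ₗ lTensor (↥P) (Coalgebra.comul (R := k) (A := D)) ∘ₗ ρF := by
          rw [hLdef, natH]
      _ = rTensor D L ∘ₗ (TensorProduct.assoc k P D D).symm.toLinearMap
            ∘ₗ lTensor (↥P) (Coalgebra.comul (R := k) (A := D)) ∘ₗ ρF := by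
          simp only [LinearMap.comp_assoc]
      _ = rTensor D L ∘ₗ rTensor D ρF ∘ₗ ρF := by rw [E]
      _ = rTensor D (L ∘ₗ ρF) ∘ₗ ρF := by
          rw [← LinearMap.comp_assoc, ← LinearMap.rTensor_comp]
      _ = rTensor D φ ∘ₗ ρF := by rw [← hφL]
  -- the counit property
  have claimCounit : Coalgebra.counit (R := k) (A := D) ∘ₗ φ
      = Coalgebra.counit (R := k) (A := C) ∘ₗ P.subtype := by
    have hcu := (hF P ρP hρP).2
    calc Coalgebra.counit (R := k) (A := D) ∘ₗ φ
        = (Coalgebra.counit (R := k) (A := D) ∘ₗ (TensorProduct.lid k D).toLinearMap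
            ∘ₗ rTensor D ε') ∘ₗ ρF := by rw [hφ]; simp only [LinearMap.comp_assoc]
      _ = (ε' ∘ₗ (TensorProduct.rid k P).toLinearMap
            ∘ₗ lTensor (↥P) (Coalgebra.counit (R := k) (A := D))) ∘ₗ ρF := by rw [natK]
      _ = ε' ∘ₗ (TensorProduct.rid k P).toLinearMap
            ∘ₗ lTensor (↥P) (Coalgebra.counit (R := k) (A := D)) ∘ₗ ρF := by
          simp only [LinearMap.comp_assoc]
      _ = ε' := by rw [hcu, LinearMap.comp_id]
  refine ⟨?_, claimCounit, claimA⟩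
  rw [claimA, ← step4, ← LinearMap.comp_assoc, LinearMap.rTensor_comp_lTensor]
end
end

section
/- Let C and D be coalgebras over a field k. Suppose assignments F and G are given, where F assigns to every finite-dimensional right C-comodule (M, ρ_M) a right D-coaction ρ^F_M on M such that every C-comodule map between finite-dimensional C-comodules is a D-comodule map for the assigned coactions, and G assigns to every finite-dimensional right D-comodule (N, σ_N) a right C-coaction σ^G_N on N such that every D-comodule map between finite-dimensional D-comodules is a C-comodule map for the assigned coactions; assume moreover that G and F are mutually inverse, i.e. σ^G applied to (M, ρ^F_M) returns ρ_M for every finite-dimensional C-comodule (M, ρ_M), and ρ^F applied to (N, σ^G_N) returns σ_N for every finite-dimensional D-comodule (N, σ_N). Then the unique coalgebra map φ : C → D with ρ^F_M = (id ⊗ φ) ∘ ρ_M for all finite-dimensional C-comodules is bijective, i.e. an isomorphism of coalgebras. -/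
/-!
Every element of a coalgebra lies in a finite-dimensional right coideal, which is a comodule
under the restricted comultiplication, and `ε ⊗ id` recovers an element from its coaction.

Surjectivity: for a finite-dimensional coideal `N ∋ d` of `D`, `F ∘ G = id` writes the coaction of
`N` as `(id ⊗ φ) ∘ G(Δ|_N)`; applying `ε ⊗ id` exhibits `d` as a value of `φ`.

Injectivity: for a finite-dimensional coideal `M ∋ c` of `C`, `φ` restricts to a `D`-comodule map
from `(M, (id ⊗ φ) ∘ Δ|_M) = F(M, Δ|_M)` onto the coideal `φ(M)` of `D`. Functoriality of `G` and
`G ∘ F = id` turn it into a `C`-comodule map out of `(M, Δ|_M)`, so `φ c = 0` forces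
`(φ ⊗ id)(Δ c) = 0`, and applying `ε ⊗ id` gives `c = 0`.
-/

open TensorProduct

noncomputable section

open LinearMap Coalgebra

section TensorNaturality

variable {k : Type} [Field k] {X Y A B B' : Type}
  [AddCommGroup X] [Module k X] [AddCommGroup Y] [Module k Y] [AddCommGroup A] [Module k A]
  [AddCommGroup B] [Module k B] [AddCommGroup B'] [Module k B']

lemma rid_lTensor_rTensor (ξ : A →ₗ[k] k) (g : X →ₗ[k] Y) (t : X ⊗[k] A) :
    TensorProduct.rid k Y (lTensor Y ξ (rTensor A g t)) =
      g (TensorProduct.rid k X (lTensor X ξ t)) := by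
  induction t using TensorProduct.induction_on with
  | zero => simp
  | tmul x a => simp
  | add t s ht hs => simp only [map_add, ht, hs]

lemma lid_rTensor_lTensor (ξ : X →ₗ[k] k) (g : A →ₗ[k] B) (t : X ⊗[k] A) :
    TensorProduct.lid k B (rTensor B ξ (lTensor X g t)) =
      g (TensorProduct.lid k A (rTensor A ξ t)) := by
  induction t using TensorProduct.induction_on with
  | zero => simp
  | tmul x a => simp
  | add t s ht hs => simp only [map_add, ht, hs]

lemma assoc_symm_lTensor_rTensor (h : A →ₗ[k] B ⊗[k] B') (g : X →ₗ[k] Y) (t : X ⊗[k] A) :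
    (TensorProduct.assoc k Y B B').symm (lTensor Y h (rTensor A g t)) =
      rTensor B' (rTensor B g) ((TensorProduct.assoc k X B B').symm (lTensor X h t)) := by
  rw [← comp_apply (lTensor Y h), lTensor_comp_rTensor, ← rTensor_comp_lTensor, comp_apply,
    rTensor_tensor]
  simp

lemma mem_range_rTensor_subtype_of_forall_mem {ι X : Type} [DecidableEq ι] [AddCommGroup X]
    [Module k X] (b : Module.Basis ι k A) (W : Submodule k X) (t : X ⊗[k] A)
    (h : ∀ i, TensorProduct.equivFinsuppOfBasisRight b t i ∈ W) :
    t ∈ range (rTensor A W.subtype) := by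
  rw [← (TensorProduct.equivFinsuppOfBasisRight b).symm_apply_apply t,
    TensorProduct.equivFinsuppOfBasisRight_symm_apply]
  exact Submodule.finsuppSum_mem _ _ _ _ fun i _ => ⟨⟨_, h i⟩ ⊗ₜ b i, rfl⟩

lemma rTensor_subtype_submoduleMap_lTensor (φ : A →ₗ[k] B) (V : Submodule k A) (t : V ⊗[k] A) :
    rTensor B (V.map φ).subtype (rTensor B (φ.submoduleMap V) (lTensor V φ t)) =
      TensorProduct.map φ φ (rTensor A V.subtype t) := by
  have hsub : (V.map φ).subtype ∘ₗ φ.submoduleMap V = φ ∘ₗ V.subtype := rfl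
  rw [← rTensor_comp_apply, hsub, ← comp_apply (rTensor B _), rTensor_comp_lTensor,
    ← map_comp_rTensor, comp_apply]

end TensorNaturality

section Coactions

variable {k : Type} [Field k] {A : Type} [AddCommGroup A] [Module k A] [Coalgebra k A]

lemma isCoaction_comul : IsCoaction k A A (comul (R := k)) := by
  refine ⟨?_, ?_⟩
  · ext a
    exact (Coalgebra.coassoc_symm_apply (R := k) a).symm
  · ext a
    simp [Coalgebra.lTensor_counit_comul (R := k)]

lemma IsCoaction.of_injective {M N : Type} [AddCommGroup M] [Module k M] [AddCommGroup N]
    [Module k N] {ι : M →ₗ[k] N} (hι : Function.Injective ι) {σ : N →ₗ[k] N ⊗[k] A}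
    (hσ : IsCoaction k A N σ) {ρ : M →ₗ[k] M ⊗[k] A} (hρ : rTensor A ι ∘ₗ ρ = σ ∘ₗ ι) :
    IsCoaction k A M ρ := by
  have hρ' (m : M) : rTensor A ι (ρ m) = σ (ι m) := congr($hρ m)
  refine ⟨ext fun m => ?_, ext fun m => hι ?_⟩
  · apply Module.Flat.rTensor_preserves_injective_linearMap _
      (Module.Flat.rTensor_preserves_injective_linearMap _ hι)
    simp only [comp_apply, LinearEquiv.coe_coe]
    rw [← assoc_symm_lTensor_rTensor, hρ', ← comp_apply (rTensor A (rTensor A ι)),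
      ← rTensor_comp, hρ, rTensor_comp, comp_apply, hρ']
    simpa using LinearMap.congr_fun hσ.1 (ι m)
  · simp only [comp_apply, LinearEquiv.coe_coe, id_apply]
    rw [← rid_lTensor_rTensor, hρ']
    simpa using LinearMap.congr_fun hσ.2 (ι m)

end Coactions

section RightCoideals

variable {k : Type} [Field k] {A : Type} [AddCommGroup A] [Module k A] [Coalgebra k A]

def Submodule.IsRightCoideal (V : Submodule k A) : Prop :=
  ∀ v ∈ V, comul (R := k) v ∈ range (rTensor A V.subtype)

lemma Submodule.IsRightCoideal.exists_coaction {V : Submodule k A} (hV : V.IsRightCoideal) :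
    ∃ ρ : V →ₗ[k] V ⊗[k] A,
      rTensor A V.subtype ∘ₗ ρ = comul ∘ₗ V.subtype ∧ IsCoaction k A V ρ := by
  have hinj : Function.Injective (rTensor A V.subtype) :=
    Module.Flat.rTensor_preserves_injective_linearMap _ V.injective_subtype
  let ρ := (LinearEquiv.ofInjective _ hinj).symm.toLinearMap ∘ₗ
    (comul ∘ₗ V.subtype).codRestrict _ fun v => hV v v.2
  have hρ : rTensor A V.subtype ∘ₗ ρ = comul ∘ₗ V.subtype := by
    ext v
    simp only [ρ, comp_apply, LinearEquiv.coe_coe]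
    exact congrArg Subtype.val ((LinearEquiv.ofInjective _ hinj).apply_symm_apply _)
  exact ⟨ρ, hρ, .of_injective V.injective_subtype isCoaction_comul hρ⟩

lemma Submodule.IsRightCoideal.map {B : Type} [AddCommGroup B] [Module k B] [Coalgebra k B]
    {φ : A →ₗ[k] B} (hφ : comul ∘ₗ φ = TensorProduct.map φ φ ∘ₗ comul) {V : Submodule k A}
    (hV : V.IsRightCoideal) : (V.map φ).IsRightCoideal := by
  rintro _ ⟨v, hv, rfl⟩
  obtain ⟨t, ht⟩ := hV v hv
  refine ⟨rTensor B (φ.submoduleMap V) (lTensor V φ t), ?_⟩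
  rw [rTensor_subtype_submoduleMap_lTensor, ht, ← comp_apply (TensorProduct.map φ φ), ← hφ,
    comp_apply]

lemma exists_finiteDimensional_isRightCoideal (a : A) :
    ∃ V : Submodule k A, a ∈ V ∧ FiniteDimensional k V ∧ V.IsRightCoideal := by
  classical
  -- `V` is spanned by the coefficients `c i` of `Δ a = ∑ c i ⊗ b i`; by coassociativity `Δ (c i)`
  -- is the `i`-th coefficient of `(id ⊗ Δ) (Δ a)`, which lies in `V ⊗ A ⊗ A`.
  let b := Module.Basis.ofVectorSpace k A
  let c := TensorProduct.equivFinsuppOfBasisRight b (comul (R := k) a)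
  let V := Submodule.span k (Set.range c)
  have hc i : c i = TensorProduct.rid k A (lTensor A (b.coord i) (comul a)) :=
    TensorProduct.equivFinsuppOfBasisRight_apply b _ i
  obtain ⟨s, hs⟩ : comul a ∈ range (rTensor A V.subtype) :=
    mem_range_rTensor_subtype_of_forall_mem b V _ fun i => Submodule.subset_span ⟨i, rfl⟩
  refine ⟨V, ?_, FiniteDimensional.span_of_finite k c.finite_range, ?_⟩
  · have hcounit : TensorProduct.rid k A (lTensor A counit (comul (R := k) a)) = a := by
      simp [Coalgebra.lTensor_counit_comul (R := k)]
    rw [← hcounit, ← hs, rid_lTensor_rTensor]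
    exact Subtype.prop _
  · have hgen i : comul (c i) ∈ range (rTensor A V.subtype) := by
      rw [hc, ← rid_lTensor_rTensor, ← Coalgebra.coassoc_symm_apply, ← hs,
        assoc_symm_lTensor_rTensor, rid_lTensor_rTensor]
      exact ⟨_, rfl⟩
    intro v hv
    refine (Submodule.span_le (p := (range (rTensor A V.subtype)).comap comul)).2 ?_ hv
    rintro _ ⟨i, rfl⟩
    exact hgen i

end RightCoideals

section CounitContraction

variable {k : Type} [Field k] {C D : Type} [AddCommGroup C] [Module k C]
  [AddCommGroup D] [Module k D] [Coalgebra k D]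

lemma mem_range_of_comul_mem_range_lTensor {φ : C →ₗ[k] D} {d : D}
    (h : comul (R := k) d ∈ range (lTensor D φ)) : d ∈ range φ := by
  obtain ⟨y, hy⟩ := h
  refine ⟨TensorProduct.lid k C (rTensor C counit y), ?_⟩
  rw [← lid_rTensor_lTensor, hy, Coalgebra.rTensor_counit_comul]
  simp

lemma eq_zero_of_rTensor_comul_eq_zero [Coalgebra k C] {φ : C →ₗ[k] D}
    (hφ : counit ∘ₗ φ = counit (R := k)) {c : C} (hc : rTensor C φ (comul (R := k) c) = 0) :
    c = 0 := by
  have hcounit : TensorProduct.lid k C (rTensor C counit (comul (R := k) c)) = c := by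
    simp [Coalgebra.rTensor_counit_comul]
  rw [← hcounit, ← hφ, rTensor_comp_apply, hc, map_zero, map_zero]

end CounitContraction

section ComoduleEquivalence

variable {k : Type} [Field k] {C D : Type} [AddCommGroup C] [Module k C] [Coalgebra k C]
  [AddCommGroup D] [Module k D] [Coalgebra k D]
  {F : ∀ (M : Type) [AddCommGroup M] [Module k M] [FiniteDimensional k M]
    (ρ : M →ₗ[k] M ⊗[k] C), IsCoaction k C M ρ → (M →ₗ[k] M ⊗[k] D)}
  {G : ∀ (N : Type) [AddCommGroup N] [Module k N] [FiniteDimensional k N]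
    (σ : N →ₗ[k] N ⊗[k] D), IsCoaction k D N σ → (N →ₗ[k] N ⊗[k] C)}
  {φ : C →ₗ[k] D}

lemma surjective_of_assignment_comp_eq_self
    {hG : ∀ (N : Type) [AddCommGroup N] [Module k N] [FiniteDimensional k N]
      (σ : N →ₗ[k] N ⊗[k] D) (h : IsCoaction k D N σ), IsCoaction k C N (G N σ h)}
    (hFG : ∀ (N : Type) [AddCommGroup N] [Module k N] [FiniteDimensional k N]
      (σ : N →ₗ[k] N ⊗[k] D) (h : IsCoaction k D N σ), F N (G N σ h) (hG N σ h) = σ)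
    (hφF : ∀ (M : Type) [AddCommGroup M] [Module k M] [FiniteDimensional k M]
      (ρ : M →ₗ[k] M ⊗[k] C) (h : IsCoaction k C M ρ), F M ρ h = lTensor M φ ∘ₗ ρ) :
    Function.Surjective φ := by
  intro d
  obtain ⟨N, hdN, _, hN⟩ := exists_finiteDimensional_isRightCoideal (k := k) d
  obtain ⟨σ, hσ, hσco⟩ := hN.exists_coaction
  have hσφ : lTensor N φ ∘ₗ G N σ hσco = σ := (hφF _ _ _).symm.trans (hFG N σ hσco)
  refine mem_range_of_comul_mem_range_lTensor ⟨rTensor C N.subtype (G N σ hσco ⟨d, hdN⟩), ?_⟩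
  rw [← comp_apply (lTensor D φ), lTensor_comp_rTensor, ← rTensor_comp_lTensor, comp_apply,
    ← comp_apply (lTensor N φ), hσφ, ← comp_apply (rTensor D _), hσ]
  rfl

lemma injective_of_assignment_comp_eq_self
    {hF : ∀ (M : Type) [AddCommGroup M] [Module k M] [FiniteDimensional k M]
      (ρ : M →ₗ[k] M ⊗[k] C) (h : IsCoaction k C M ρ), IsCoaction k D M (F M ρ h)}
    (hGmap : ∀ (M : Type) [AddCommGroup M] [Module k M] [FiniteDimensional k M]
      (N : Type) [AddCommGroup N] [Module k N] [FiniteDimensional k N]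
      (σM : M →ₗ[k] M ⊗[k] D) (hM : IsCoaction k D M σM)
      (σN : N →ₗ[k] N ⊗[k] D) (hN : IsCoaction k D N σN)
      (f : M →ₗ[k] N), σN ∘ₗ f = rTensor D f ∘ₗ σM →
        G N σN hN ∘ₗ f = rTensor C f ∘ₗ G M σM hM)
    (hGF : ∀ (M : Type) [AddCommGroup M] [Module k M] [FiniteDimensional k M]
      (ρ : M →ₗ[k] M ⊗[k] C) (h : IsCoaction k C M ρ), G M (F M ρ h) (hF M ρ h) = ρ)
    (hφ : IsCoalgebraMap k C D φ)
    (hφF : ∀ (M : Type) [AddCommGroup M] [Module k M] [FiniteDimensional k M]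
      (ρ : M →ₗ[k] M ⊗[k] C) (h : IsCoaction k C M ρ), F M ρ h = lTensor M φ ∘ₗ ρ) :
    Function.Injective φ := by
  refine (injective_iff_map_eq_zero φ).2 fun c hc => ?_
  obtain ⟨M, hcM, _, hM⟩ := exists_finiteDimensional_isRightCoideal (k := k) c
  obtain ⟨ρ, hρ, hρco⟩ := hM.exists_coaction
  obtain ⟨σ, hσ, hσco⟩ := (hM.map hφ.1).exists_coaction
  let f := φ.submoduleMap M
  have hinj : Function.Injective (rTensor D (M.map φ).subtype) :=
    Module.Flat.rTensor_preserves_injective_linearMap _ (M.map φ).injective_subtype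
  have hf : σ ∘ₗ f = rTensor D f ∘ₗ F M ρ hρco := by
    ext m
    apply hinj
    rw [hφF, comp_apply, comp_apply, comp_apply, rTensor_subtype_submoduleMap_lTensor,
      ← comp_apply (rTensor D _), hσ, ← comp_apply (rTensor C _), hρ]
    exact LinearMap.congr_fun hφ.1 m
  have hGf := hGmap M (M.map φ) _ (hF M ρ hρco) σ hσco f hf
  rw [hGF] at hGf
  have hfc : f ⟨c, hcM⟩ = 0 := Subtype.ext hc
  apply eq_zero_of_rTensor_comul_eq_zero hφ.2
  have hsub : φ ∘ₗ M.subtype = (M.map φ).subtype ∘ₗ f := rfl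
  have hΔc : comul c = rTensor C M.subtype (ρ ⟨c, hcM⟩) :=
    (LinearMap.congr_fun hρ ⟨c, hcM⟩).symm
  rw [hΔc, ← rTensor_comp_apply, hsub, rTensor_comp_apply, ← comp_apply (rTensor C f), ← hGf,
    comp_apply, hfc, map_zero, map_zero]

end ComoduleEquivalence

variable (k : Type) [Field k]
variable (C : Type) [AddCommGroup C] [Module k C] [Coalgebra k C]
variable (D : Type) [AddCommGroup D] [Module k D] [Coalgebra k D]

theorem reconstruction_equivalence_isomorphism
    (F : ∀ (M : Type) [AddCommGroup M] [Module k M] [FiniteDimensional k M]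
      (ρ : M →ₗ[k] M ⊗[k] C), IsCoaction k C M ρ → (M →ₗ[k] M ⊗[k] D))
    (hF : ∀ (M : Type) [AddCommGroup M] [Module k M] [FiniteDimensional k M]
      (ρ : M →ₗ[k] M ⊗[k] C) (h : IsCoaction k C M ρ), IsCoaction k D M (F M ρ h))
    (G : ∀ (N : Type) [AddCommGroup N] [Module k N] [FiniteDimensional k N]
      (σ : N →ₗ[k] N ⊗[k] D), IsCoaction k D N σ → (N →ₗ[k] N ⊗[k] C))
    (hG : ∀ (N : Type) [AddCommGroup N] [Module k N] [FiniteDimensional k N]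
      (σ : N →ₗ[k] N ⊗[k] D) (h : IsCoaction k D N σ), IsCoaction k C N (G N σ h))
    (hGmap : ∀ (M : Type) [AddCommGroup M] [Module k M] [FiniteDimensional k M]
      (N : Type) [AddCommGroup N] [Module k N] [FiniteDimensional k N]
      (σM : M →ₗ[k] M ⊗[k] D) (hM : IsCoaction k D M σM)
      (σN : N →ₗ[k] N ⊗[k] D) (hN : IsCoaction k D N σN)
      (f : M →ₗ[k] N), σN ∘ₗ f = LinearMap.rTensor D f ∘ₗ σM →
        G N σN hN ∘ₗ f = LinearMap.rTensor C f ∘ₗ G M σM hM)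
    (hGF : ∀ (M : Type) [AddCommGroup M] [Module k M] [FiniteDimensional k M]
      (ρ : M →ₗ[k] M ⊗[k] C) (h : IsCoaction k C M ρ), G M (F M ρ h) (hF M ρ h) = ρ)
    (hFG : ∀ (N : Type) [AddCommGroup N] [Module k N] [FiniteDimensional k N]
      (σ : N →ₗ[k] N ⊗[k] D) (h : IsCoaction k D N σ), F N (G N σ h) (hG N σ h) = σ) :
    ∀ φ : C →ₗ[k] D, IsCoalgebraMap k C D φ →
      (∀ (M : Type) [AddCommGroup M] [Module k M] [FiniteDimensional k M]
        (ρ : M →ₗ[k] M ⊗[k] C) (h : IsCoaction k C M ρ),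
          F M ρ h = LinearMap.lTensor M φ ∘ₗ ρ) →
      Function.Bijective φ := by
  intro φ hφ hφF
  exact ⟨injective_of_assignment_comp_eq_self hGmap hGF hφ hφF,
    surjective_of_assignment_comp_eq_self hFG hφF⟩
end
end
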